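/- An arbitrary product ∏_{i∈I} R_i of a family of commutative rings is a PF-ring if and only if each R_i is a PF-ring. -/

import Mathlib

/-- A commutative ring is a PF-ring if every principal ideal is flat. -/
def IsPFRing (R : Type*) [CommRing R] : Prop :=
  ∀ a : R, Module.Flat R (Ideal.span {a})

/-! By the equational criterion, `Ideal.span {x}` is flat iff every relation `s • x = 0` is
trivial, i.e. iff `x = α * x` for some `α` killing `s`. This elementwise condition is checked
coordinatewise in a product, and a relation in `R i` lifts to `∀ i, R i` via `Pi.single i`. -/

namespace Ideal

variable {R : Type*} [CommRing R]

theorem exists_mul_eq_zero_and_eq_mul_of_flat_span_singleton {x s : R}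
    [Module.Flat R (span {x})] (hsx : s * x = 0) : ∃ α, α * s = 0 ∧ x = α * x := by
  let x' : span {x} := ⟨x, mem_span_singleton_self x⟩
  have hrel : ∑ _ : Fin 1, s • x' = 0 := by
    simpa [x', Subtype.ext_iff] using hsx
  obtain ⟨k, a, y, hx, ha⟩ := Module.Flat.isTrivialRelation_of_sum_smul_eq_zero hrel
  choose c hc using fun j => mem_span_singleton'.mp (y j).2
  refine ⟨∑ j, a 0 j * c j, ?_, ?_⟩
  · rw [Finset.sum_mul]
    refine Finset.sum_eq_zero fun j _ => ?_
    have hsa : s * a 0 j = 0 := by simpa only [Fin.sum_univ_one] using ha j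
    linear_combination c j * hsa
  · simpa [Subtype.ext_iff, ← hc, Finset.sum_mul, mul_assoc, x'] using hx 0

theorem flat_span_singleton_of_forall_mul_eq_zero {x : R}
    (h : ∀ s, s * x = 0 → ∃ α, α * s = 0 ∧ x = α * x) : Module.Flat R (span {x}) := by
  refine Module.Flat.of_forall_isTrivialRelation fun {l f y} hrel => ?_
  choose c hc using fun i => mem_span_singleton'.mp (y i).2
  have hsx : (∑ i, f i * c i) * x = 0 := by
    simpa [Subtype.ext_iff, ← hc, Finset.sum_mul, mul_assoc] using hrel
  obtain ⟨α, hαs, hαx⟩ := h _ hsx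
  refine ⟨1, fun i _ => c i * α, fun _ => ⟨x, mem_span_singleton_self x⟩, fun i => ?_, fun _ => ?_⟩
  · ext
    simp [← hc, mul_assoc, ← hαx]
  · simpa [← mul_assoc, ← Finset.sum_mul, mul_comm α] using hαs

theorem flat_span_singleton_iff (x : R) :
    Module.Flat R (span {x}) ↔ ∀ s, s * x = 0 → ∃ α, α * s = 0 ∧ x = α * x :=
  ⟨fun _ _ => exists_mul_eq_zero_and_eq_mul_of_flat_span_singleton,
    flat_span_singleton_of_forall_mul_eq_zero⟩

end Ideal

theorem isPFRing_iff (R : Type*) [CommRing R] :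
    IsPFRing R ↔ ∀ s x : R, s * x = 0 → ∃ α, α * s = 0 ∧ x = α * x := by
  simp only [IsPFRing, Ideal.flat_span_singleton_iff]
  exact forall_comm

theorem pi_isPFRing_iff {ι : Type*} (R : ι → Type*) [∀ i, CommRing (R i)] :
    IsPFRing (∀ i, R i) ↔ ∀ i, IsPFRing (R i) := by
  classical
  simp only [isPFRing_iff]
  constructor
  · intro h i s x hsx
    obtain ⟨α, hαs, hαx⟩ := h (Pi.single i s) (Pi.single i x)
      (by rw [← Pi.single_mul, hsx, Pi.single_zero])
    exact ⟨α i, by simpa using congrFun hαs i, by simpa using congrFun hαx i⟩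
  · intro h s x hsx
    choose α hαs hαx using fun i => h i (s i) (x i) (congrFun hsx i)
    exact ⟨α, funext hαs, funext hαx⟩
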